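/- arXiv:2208.08707 — 3 statements merged into one kernel-verified Lean document; each statement's English description precedes it below -/
import Mathlib

section
/- Let 𝒢 be a subgroup of the symmetric group S_n acting on ℝ^n by coordinate permutation, let p ∈ [1,∞), and let F ∈ C(ℝ^n; ℝ^m). Suppose that for every compact set K ⊂ ℝ^n and every ε > 0 there exists a continuous 𝒢 invariant function F̂ : ℝ^n → ℝ^m with ‖F − F̂‖_{L^p(K)} < ε. Then F itself is 𝒢 invariant. -/
open MeasureTheory

namespace SymDyn

/-- Action of a permutation on ℝⁿ by permuting coordinates: `(𝔤(x))_i = x_{𝔤(i)}`. -/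
def permAct {n : ℕ} (g : Equiv.Perm (Fin n)) (x : Fin n → ℝ) : Fin n → ℝ :=
  fun i => x (g i)

/-- `F` is 𝒢 invariant. -/
def IsInvariant {n : ℕ} {α : Type*} (G : Subgroup (Equiv.Perm (Fin n)))
    (F : (Fin n → ℝ) → α) : Prop :=
  ∀ g ∈ G, ∀ x, F (permAct g x) = F x

/-- `f` is 𝒢 equivariant. -/
def IsEquivariant {n : ℕ} (G : Subgroup (Equiv.Perm (Fin n)))
    (f : (Fin n → ℝ) → (Fin n → ℝ)) : Prop :=
  ∀ g ∈ G, ∀ x, f (permAct g x) = permAct g (f x)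

/-- `G` is a transitive permutation group on indices. -/
def IsTransitive {n : ℕ} (G : Subgroup (Equiv.Perm (Fin n))) : Prop :=
  ∀ i j : Fin n, ∃ g ∈ G, g i = j

/-- Lipschitz with some (finite) constant. -/
def IsLip {E F : Type*} [PseudoEMetricSpace E] [PseudoEMetricSpace F] (f : E → F) : Prop :=
  ∃ K : NNReal, LipschitzWith K f

/-- `φ` is the time-`T` flow map of the ODE `ż = f(z)`. -/
def IsFlowMap {n : ℕ} (f : (Fin n → ℝ) → (Fin n → ℝ)) (T : ℝ)
    (φ : (Fin n → ℝ) → (Fin n → ℝ)) : Prop :=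
  ∀ x : Fin n → ℝ, ∃ z : ℝ → (Fin n → ℝ),
    z 0 = x ∧ (∀ t : ℝ, HasDerivAt z (f (z t)) t) ∧ φ x = z T

/-- Attainable set of a control family: all finite compositions
`φ(f₁,τ₁) ∘ ⋯ ∘ φ(f_k,τ_k)` of flow maps of members of `𝓕`. -/
def AttainSet {n : ℕ} (𝓕 : Set ((Fin n → ℝ) → (Fin n → ℝ))) :
    Set ((Fin n → ℝ) → (Fin n → ℝ)) :=
  { φ | ∃ k : ℕ, 1 ≤ k ∧
      ∃ (fs : Fin k → (Fin n → ℝ) → (Fin n → ℝ)) (τ : Fin k → ℝ)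
        (ψ : Fin k → (Fin n → ℝ) → (Fin n → ℝ)),
        (∀ i, fs i ∈ 𝓕 ∧ 0 ≤ τ i ∧ IsFlowMap (fs i) (τ i) (ψ i)) ∧
        φ = (List.ofFn ψ).foldr (· ∘ ·) id }

/-- Dynamical hypothesis space `H_ode(𝓕,𝓖) = {g ∘ φ : g ∈ 𝓖, φ ∈ A_𝓕}`. -/
def Hode {n : ℕ} {β : Type*} (𝓕 : Set ((Fin n → ℝ) → (Fin n → ℝ)))
    (𝓖 : Set ((Fin n → ℝ) → β)) : Set ((Fin n → ℝ) → β) :=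
  { F | ∃ g ∈ 𝓖, ∃ φ ∈ AttainSet 𝓕, F = g ∘ φ }

/-- Closure of a family of functions in the topology of compact convergence. -/
def ccClosure {α F : Type*} [TopologicalSpace α] [NormedAddCommGroup F]
    (S : Set (α → F)) : Set (α → F) :=
  { h | ∀ K : Set α, IsCompact K → ∀ ε : ℝ, 0 < ε → ∃ f ∈ S, ∀ x ∈ K, ‖f x - h x‖ ≤ ε }

/-- `CH̄(S)`: closure of the convex hull in the topology of compact convergence. -/
def CHbar {α F : Type*} [TopologicalSpace α] [NormedAddCommGroup F] [NormedSpace ℝ F]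
    (S : Set (α → F)) : Set (α → F) :=
  ccClosure (convexHull ℝ S)

/-- The `coor` operator: scalar functions `f₁` such that for some `𝔱_i ∈ G` with
`𝔱_i(1) = i`, the assembled mapping `[f₁∘𝔱_1, …, f₁∘𝔱_n]` belongs to `𝓕`. -/
def coorFam {n : ℕ} [NeZero n] (G : Subgroup (Equiv.Perm (Fin n)))
    (𝓕 : Set ((Fin n → ℝ) → (Fin n → ℝ))) : Set ((Fin n → ℝ) → ℝ) :=
  { f1 | ∃ t : Fin n → Equiv.Perm (Fin n),
      (∀ i, t i ∈ G ∧ t i 0 = i) ∧ (fun x i => f1 (permAct (t i) x)) ∈ 𝓕 }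

/-- One-dimensional well function: Lipschitz with zero set a nondegenerate
closed bounded interval. -/
def IsWell1D (h : ℝ → ℝ) : Prop :=
  IsLip h ∧ ∃ a b : ℝ, a < b ∧ {x : ℝ | h x = 0} = Set.Icc a b

/-- Symmetric invariant well function. -/
def IsSymWell {n : ℕ} (τ : (Fin n → ℝ) → ℝ) : Prop :=
  IsLip τ ∧
  (∀ g : Equiv.Perm (Fin n), ∀ x, τ (permAct g x) = τ x) ∧
  (∃ I : Set ℝ, I.Nonempty ∧ I.OrdConnected ∧ Bornology.IsBounded I ∧
      ∀ x : Fin n → ℝ, (∀ i, x i ∈ I) → τ x = 0) ∧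
  (∀ i : Fin n, ∀ b : ℝ, 0 < b → ∃ a : ℝ, 0 < a ∧
      ∀ x : Fin n → ℝ, a < |x i| → (∀ j, j ≠ i → |x j| < b) → τ x ≠ 0)

/-- A point is in general position iff its coordinates are pairwise distinct. -/
def GeneralPos {n : ℕ} (x : Fin n → ℝ) : Prop := Function.Injective x

/-- The similarity `s̄(x,y)` is nonzero: at least one of the two points is in
general position, and some coordinate value is shared. -/
def SimilarPos {n : ℕ} (x y : Fin n → ℝ) : Prop :=
  (GeneralPos x ∨ GeneralPos y) ∧ ∃ i j : Fin n, x i = y j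

/-- The perturbation property of a control family. -/
def PerturbProp {n : ℕ} (𝓕 : Set ((Fin n → ℝ) → (Fin n → ℝ))) : Prop :=
  ∀ x y : Fin n → ℝ, SimilarPos x y →
    ∃ f ∈ 𝓕, ∃ u : ℝ → ℝ, Continuous u ∧ StrictMono u ∧
      ∃ i : Fin n, x i = y i ∧ f (fun j => u (x j)) i ≠ f (fun j => u (y j)) i

/-- Cross section `Q_𝔤 = {x : x_{𝔤⁻¹(1)} > x_{𝔤⁻¹(2)} > ⋯ > x_{𝔤⁻¹(n)}}`. -/
def crossSec {n : ℕ} (g : Equiv.Perm (Fin n)) : Set (Fin n → ℝ) :=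
  { x | ∀ i j : Fin n, i < j → x (g⁻¹ j) < x (g⁻¹ i) }

/-- `A` is a (right) transversal of the subgroup `G`. -/
def IsTransversal {n : ℕ} (G : Subgroup (Equiv.Perm (Fin n)))
    (A : Set (Equiv.Perm (Fin n))) : Prop :=
  (∀ a ∈ A, ∀ b ∈ A, a ≠ b → a * b⁻¹ ∉ G) ∧
  (∀ b : Equiv.Perm (Fin n), ∃ a ∈ A, a * b⁻¹ ∈ G)

/-- Cross section of a transversal: `Q_A = ⋃_{𝔞 ∈ A} Q_𝔞`. -/
def crossSecA {n : ℕ} (A : Set (Equiv.Perm (Fin n))) : Set (Fin n → ℝ) :=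
  ⋃ a ∈ A, crossSec a

/-- `𝔞` and `𝔟` are directly `𝓕` connected. -/
def DirectlyConn {n : ℕ} (𝓕 : Set ((Fin n → ℝ) → (Fin n → ℝ)))
    (a b : Equiv.Perm (Fin n)) : Prop :=
  ∃ i j : Fin n, i ≠ j ∧ a = Equiv.swap i j * b ∧
    ∃ z ∈ frontier (crossSec a) ∩ frontier (crossSec b), ∃ f ∈ 𝓕, f z i ≠ f z j

/-- `𝔞` and `𝔟` are `𝓕` connected (joined by a chain of directly connected elements). -/
def ConnIn {n : ℕ} (𝓕 : Set ((Fin n → ℝ) → (Fin n → ℝ)))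
    (a b : Equiv.Perm (Fin n)) : Prop :=
  ∃ (s : ℕ) (g : Fin (s + 1) → Equiv.Perm (Fin n)), g 0 = a ∧ g (Fin.last s) = b ∧
    ∀ i : Fin s, DirectlyConn 𝓕 (g i.castSucc) (g i.succ)

/-- `𝓕` resolves `G`: it has the perturbation property and is `G` transversally
transitive. -/
def Resolves {n : ℕ} (G : Subgroup (Equiv.Perm (Fin n)))
    (𝓕 : Set ((Fin n → ℝ) → (Fin n → ℝ))) : Prop :=
  PerturbProp 𝓕 ∧ ∃ A : Set (Equiv.Perm (Fin n)), IsTransversal G A ∧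
    ∀ a ∈ A, ∀ b ∈ A, a ≠ b → ConnIn 𝓕 a b

/-- A finite point set is `G` distinct: the `G` orbits of its points are distinct. -/
def GDistinct {n M : ℕ} (G : Subgroup (Equiv.Perm (Fin n)))
    (x : Fin M → Fin n → ℝ) : Prop :=
  ∀ g ∈ G, ∀ i j : Fin M, permAct g (x i) = x j → g = 1 ∧ i = j

/-- `x ≺ y`: every coordinate of `x` is below every coordinate of `y`. -/
def precLT {n : ℕ} (x y : Fin n → ℝ) : Prop := ∀ i j : Fin n, x i < y j

/-- A finite point set is partially ordered. -/
def PartiallyOrderedPts {n m : ℕ} (x : Fin m → Fin n → ℝ) : Prop :=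
  ∀ i j : Fin m,
    ((j < i ∧ GeneralPos (x i) ∧ GeneralPos (x j)) ∨
      (¬ GeneralPos (x i) ∧ GeneralPos (x j))) → precLT (x i) (x j)

/-- A finite point set is well perturbed: whenever two (indexed) coordinate values
coincide nontrivially, both points fail to be in general position. -/
def WellPerturbed {n m : ℕ} (y : Fin m → Fin n → ℝ) : Prop :=
  ∀ (j l : Fin m) (i k : Fin n), (i, j) ≠ (k, l) → y j i = y l k →
    ¬ GeneralPos (y j) ∧ ¬ GeneralPos (y l)

/-- Composition of a finite family of maps, applying the index-`0` map first. -/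
def foldComp {E : Type*} {s : ℕ} (Φ : Fin s → E → E) : E → E :=
  (List.ofFn Φ).foldl (fun acc f => f ∘ acc) id

/-- `t` is a partition `0 = t₀ < t₁ < ⋯ < t_s = T` of `[0,T]`. -/
def IsPartition {s : ℕ} (T : ℝ) (t : Fin (s + 1) → ℝ) : Prop :=
  StrictMono t ∧ t 0 = 0 ∧ t (Fin.last s) = T

/-- Discrete flow of a one-step numerical integrator `Φ` over a partition. -/
def discFlow {n : ℕ} (Φ : ℝ → (Fin n → ℝ) → (Fin n → ℝ)) {s : ℕ}
    (t : Fin (s + 1) → ℝ) : (Fin n → ℝ) → (Fin n → ℝ) :=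
  foldComp (fun i : Fin s => Φ (t i.succ - t i.castSucc))

/-- Convergence of a numerical scheme `Φ` for the vector field `f`. -/
def ConvergentScheme {n : ℕ} (f : (Fin n → ℝ) → (Fin n → ℝ))
    (Φ : ℝ → (Fin n → ℝ) → (Fin n → ℝ)) : Prop :=
  (∀ K : Set (Fin n → ℝ), IsCompact K → ∀ ε : ℝ, 0 < ε → ∃ δ > (0 : ℝ),
      ∀ τ : ℝ, 0 < τ → τ < δ → ∀ x ∈ K, ‖Φ τ x - x‖ ≤ ε) ∧
  (∀ T : ℝ, ∀ φT : (Fin n → ℝ) → (Fin n → ℝ), IsFlowMap f T φT →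
      ∀ K : Set (Fin n → ℝ), IsCompact K → ∀ ε : ℝ, 0 < ε → ∃ δ > (0 : ℝ),
      ∀ (s : ℕ) (t : Fin (s + 1) → ℝ), IsPartition T t →
        (∀ i : Fin s, t i.succ - t i.castSucc < δ) →
        ∀ x ∈ K, ‖discFlow Φ t x - φT x‖ ≤ ε) ∧
  (∃ g : (Fin n → ℝ) → ℝ → ℝ, Continuous (fun q : (Fin n → ℝ) × ℝ => g q.1 q.2) ∧
      ∀ T : ℝ, 0 ≤ T → ∀ (s : ℕ) (t : Fin (s + 1) → ℝ), IsPartition T t →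
        ∀ x, ‖discFlow Φ t x‖ ≤ g x T)

/-- `L^p` error of `f` on the region `K` (with respect to Lebesgue measure). -/
noncomputable def lpErr {n : ℕ} {β : Type*} [NormedAddCommGroup β]
    (p : ℝ) (K : Set (Fin n → ℝ)) (f : (Fin n → ℝ) → β) : ENNReal :=
  eLpNorm f (ENNReal.ofReal p) (volume.restrict K)

/-- Universal approximation property in `L^p` on compact sets. -/
def HasUAP {n : ℕ} {β : Type*} [NormedAddCommGroup β]
    (p : ℝ) (H : Set ((Fin n → ℝ) → β)) : Prop :=
  ∀ F : (Fin n → ℝ) → β, Continuous F → ∀ K : Set (Fin n → ℝ), IsCompact K →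
    ∀ ε : ℝ, 0 < ε → ∃ Fh ∈ H, lpErr p K (fun x => F x - Fh x) ≤ ENNReal.ofReal ε

/-- `G` universal approximation property in `L^p` on compact sets. -/
def HasGUAP {n : ℕ} {β : Type*} [NormedAddCommGroup β]
    (G : Subgroup (Equiv.Perm (Fin n))) (p : ℝ) (H : Set ((Fin n → ℝ) → β)) : Prop :=
  ∀ F : (Fin n → ℝ) → β, Continuous F → IsInvariant G F →
    ∀ K : Set (Fin n → ℝ), IsCompact K →
    ∀ ε : ℝ, 0 < ε → ∃ Fh ∈ H, lpErr p K (fun x => F x - Fh x) ≤ ENNReal.ofReal ε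

/-- Discretized attainable set obtained from a numerical scheme `sch`. -/
def discAttain {n : ℕ} (𝓕 : Set ((Fin n → ℝ) → (Fin n → ℝ)))
    (sch : ((Fin n → ℝ) → (Fin n → ℝ)) → ℝ → (Fin n → ℝ) → (Fin n → ℝ)) :
    Set ((Fin n → ℝ) → (Fin n → ℝ)) :=
  { φ | ∃ l : ℕ, 1 ≤ l ∧ ∃ (fs : Fin l → (Fin n → ℝ) → (Fin n → ℝ)) (t : Fin (l + 1) → ℝ),
      t 0 = 0 ∧ StrictMono t ∧ (∀ i, fs i ∈ 𝓕) ∧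
      φ = foldComp (fun i : Fin l => sch (fs i) (t i.succ - t i.castSucc)) }


/-! The continuous function `H = F ∘ 𝔤 - F` vanishes. Since `𝔤` preserves Lebesgue measure and
every approximant satisfies `F̂ ∘ 𝔤 = F̂`, writing `H = (F - F̂) ∘ 𝔤 - (F - F̂)` bounds
`‖H‖_{L^p(K)}` by `‖F - F̂‖_{L^p(𝔤 K)} + ‖F - F̂‖_{L^p(K)}`, which is arbitrarily small. So `H`
vanishes almost everywhere on every compact set, hence everywhere by continuity. -/

theorem permAct_eq_piCongrLeft {n : ℕ} (g : Equiv.Perm (Fin n)) :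
    permAct g = ⇑(MeasurableEquiv.piCongrLeft (fun _ : Fin n => ℝ) g.symm) := by
  funext x i
  simpa [permAct, MeasurableEquiv.coe_piCongrLeft] using
    (Equiv.piCongrLeft_apply_apply (fun _ : Fin n => ℝ) g.symm x (g i)).symm

theorem continuous_permAct {n : ℕ} (g : Equiv.Perm (Fin n)) : Continuous (permAct g) :=
  continuous_pi fun i => continuous_apply (g i)

theorem measurePreserving_permAct {n : ℕ} (g : Equiv.Perm (Fin n)) :
    MeasurePreserving (permAct g) volume volume := by
  rw [permAct_eq_piCongrLeft]
  exact volume_measurePreserving_piCongrLeft _ _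

theorem measurableEmbedding_permAct {n : ℕ} (g : Equiv.Perm (Fin n)) :
    MeasurableEmbedding (permAct g) := by
  rw [permAct_eq_piCongrLeft]
  exact MeasurableEquiv.measurableEmbedding _

theorem eLpNorm_comp_sub_le_of_comp_eq {X E : Type*} [MeasurableSpace X] [NormedAddCommGroup E]
    {μ : Measure X} {p : ENNReal} {T : X → X} (hT : MeasurePreserving T μ μ)
    (hTe : MeasurableEmbedding T) {f f' : X → E} (hff' : AEStronglyMeasurable (f - f') μ)
    (hf' : f' ∘ T = f') (hp : 1 ≤ p) (s : Set X) :
    eLpNorm (f ∘ T - f) p (μ.restrict s) ≤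
      eLpNorm (f - f') p (μ.restrict (T '' s)) + eLpNorm (f - f') p (μ.restrict s) := by
  have hdecomp : f ∘ T - f = (f - f') ∘ T - (f - f') := by
    rw [Pi.sub_comp, hf', sub_sub_sub_cancel_right]
  have hTs : MeasurePreserving T (μ.restrict s) (μ.restrict (T '' s)) :=
    hT.restrict_image_emb hTe s
  rw [hdecomp, ← eLpNorm_comp_measurePreserving hff'.restrict hTs]
  exact eLpNorm_sub_le (hff'.restrict.comp_measurePreserving hTs) hff'.restrict hp

theorem _root_.Continuous.eq_zero_of_eLpNorm_restrict_compact_eq_zero {X E : Type*}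
    [TopologicalSpace X] [WeaklyLocallyCompactSpace X] [MeasurableSpace X]
    [OpensMeasurableSpace X] [NormedAddCommGroup E] [SecondCountableTopologyEither X E]
    {μ : Measure X} [μ.IsOpenPosMeasure] {p : ENNReal} (hp : p ≠ 0) {f : X → E}
    (hf : Continuous f) (h : ∀ K, IsCompact K → eLpNorm f p (μ.restrict K) = 0) : f = 0 := by
  funext x
  obtain ⟨K, hK, hKx⟩ := exists_compact_mem_nhds x
  have hae : f =ᵐ[μ.restrict K] 0 :=
    (eLpNorm_eq_zero_iff hf.aestronglyMeasurable hp).mp (h K hK)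
  exact Measure.eqOn_open_of_ae_eq (ae_restrict_of_ae_restrict_of_subset interior_subset hae)
    isOpen_interior hf.continuousOn continuousOn_const (mem_interior_iff_mem_nhds.mpr hKx)

theorem _root_.ENNReal.eq_zero_of_forall_lt_ofReal {a : ENNReal}
    (h : ∀ ε : ℝ, 0 < ε → a < ENNReal.ofReal ε) : a = 0 := by
  refine nonpos_iff_eq_zero.mp (ENNReal.le_of_forall_pos_le_add fun ε hε _ => ?_)
  simpa using (h ε hε).le

/-- If a continuous `F : ℝⁿ → ℝᵐ` can be approximated in `L^p` on every
compact set by continuous `𝒢` invariant functions, then `F` is itself `𝒢` invariant. -/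
theorem closure_of_invariant_functions
    (n m : ℕ) (G : Subgroup (Equiv.Perm (Fin n))) (p : ℝ) (hp : 1 ≤ p)
    (F : (Fin n → ℝ) → Fin m → ℝ) (hF : Continuous F)
    (happrox : ∀ K : Set (Fin n → ℝ), IsCompact K → ∀ ε : ℝ, 0 < ε →
      ∃ Fh : (Fin n → ℝ) → Fin m → ℝ, Continuous Fh ∧ IsInvariant G Fh ∧
        lpErr p K (fun x => F x - Fh x) < ENNReal.ofReal ε) :
    IsInvariant G F := by
  intro g hg x
  have hq : 1 ≤ ENNReal.ofReal p := ENNReal.one_le_ofReal.mpr hp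
  suffices F ∘ permAct g - F = 0 from sub_eq_zero.mp (congrFun this x)
  refine ((hF.comp (continuous_permAct g)).sub hF).eq_zero_of_eLpNorm_restrict_compact_eq_zero
    (μ := volume) (zero_lt_one.trans_le hq).ne' fun K hK =>
    ENNReal.eq_zero_of_forall_lt_ofReal fun ε hε => ?_
  obtain ⟨Fh, hFh, hFhG, herr⟩ := happrox (permAct g '' K ∪ K)
    ((hK.image (continuous_permAct g)).union hK) (ε / 2) (half_pos hε)
  calc eLpNorm (F ∘ permAct g - F) (ENNReal.ofReal p) (volume.restrict K)
      ≤ lpErr p (permAct g '' K) (F - Fh) + lpErr p K (F - Fh) :=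
        eLpNorm_comp_sub_le_of_comp_eq (measurePreserving_permAct g)
          (measurableEmbedding_permAct g) (hF.sub hFh).aestronglyMeasurable
          (funext (hFhG g hg)) hq K
    _ ≤ lpErr p (permAct g '' K ∪ K) (F - Fh) + lpErr p (permAct g '' K ∪ K) (F - Fh) :=
        add_le_add (eLpNorm_mono_measure _ (Measure.restrict_mono Set.subset_union_left le_rfl))
          (eLpNorm_mono_measure _ (Measure.restrict_mono Set.subset_union_right le_rfl))
    _ < ENNReal.ofReal (ε / 2) + ENNReal.ofReal (ε / 2) := ENNReal.add_lt_add herr herr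
    _ = ENNReal.ofReal ε := by
        rw [← ENNReal.ofReal_add (half_pos hε).le (half_pos hε).le, add_halves]

end SymDyn
end

section
/- Let 𝒢 ≤ S_n be a transitive subgroup, let ℋ = stab_1(𝒢), let f_1 : ℝ^n → ℝ be ℋ invariant, and choose 𝔱_k ∈ 𝒢 with 𝔱_k(1) = k for each k = 1, …, n. Then the mapping f : ℝ^n → ℝ^n defined by f(x) = [f_1(𝔱_1(x)), f_1(𝔱_2(x)), …, f_1(𝔱_n(x))] is 𝒢 equivariant. -/
open MeasureTheory

namespace SymDyn

/-- From an `ℋ = stab₁(𝒢)` invariant scalar function `f₁` and elements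
`𝔱_k ∈ 𝒢` with `𝔱_k(1) = k`, the assembled mapping `x ↦ [f₁(𝔱_1(x)), …, f₁(𝔱_n(x))]`
is `𝒢` equivariant. -/
theorem equivariant_from_stabilizer_invariant
    (n : ℕ) [NeZero n] (G : Subgroup (Equiv.Perm (Fin n))) (hG : IsTransitive G)
    (f1 : (Fin n → ℝ) → ℝ)
    (hinv : ∀ h ∈ G, h 0 = 0 → ∀ x : Fin n → ℝ, f1 (permAct h x) = f1 x)
    (t : Fin n → Equiv.Perm (Fin n)) (htmem : ∀ k, t k ∈ G) (ht1 : ∀ k, t k 0 = k) :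
    IsEquivariant G (fun x i => f1 (permAct (t i) x)) := by
  intro g hg x
  funext i
  have key : ∀ (a b : Equiv.Perm (Fin n)) (y : Fin n → ℝ),
      permAct a (permAct b y) = permAct (b * a) y := by
    intro a b y; funext j; rfl
  show f1 (permAct (t i) (permAct g x)) = f1 (permAct (t (g i)) x)
  rw [key]
  have h1 : g * t i = t (g i) * ((t (g i))⁻¹ * g * t i) := by group
  rw [h1, ← key]
  exact hinv _ (G.mul_mem (G.mul_mem (G.inv_mem (htmem _)) hg) (htmem i))
    (by simp only [Equiv.Perm.mul_apply, ht1, Equiv.Perm.inv_def, Equiv.symm_apply_eq]) _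
end SymDyn
end

section
/- Let ℱ = { x ↦ γ(x)𝟏 : γ : ℝ^n → ℝ Lipschitz }, where 𝟏 = (1,…,1) ∈ ℝ^n. Then every mapping φ in the attainable set A_ℱ satisfies [φ(x)]_i − [φ(x)]_j = x_i − x_j for all x ∈ ℝ^n and all indices i, j. Consequently, with the terminal family G = {g} where g(x) = max_i x_i − min_i x_i, every F ∈ H_ode(ℱ, {g}) equals g, so H_ode(ℱ, {g}) cannot approximate all S_n invariant continuous functions. -/
/-!
A field `γ(x)𝟏` moves all coordinates at the same speed, so along its trajectories every
difference `zᵢ - zⱼ` has zero derivative; hence every attainable map is a translation along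
`𝟏` at each point, which leaves `max - min` unchanged. The hypothesis space is therefore the
single function `max - min`, which stays at distance at least `1` from the constant `2` on the
unit cube, where `max - min ≤ 1`.
-/

open MeasureTheory

namespace SymDyn

/-- The control family `{x ↦ γ(x)𝟏 : γ Lipschitz}`. -/
def gammaFam (n : ℕ) : Set ((Fin n → ℝ) → (Fin n → ℝ)) :=
  { f | ∃ γ : (Fin n → ℝ) → ℝ, IsLip γ ∧ f = fun x _ => γ x }

/-- The terminal function `g(x) = max_i x_i − min_i x_i`. -/
noncomputable def maxMinusMin (n : ℕ) [NeZero n] (x : Fin n → ℝ) : ℝ :=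
  haveI : Nonempty (Fin n) := ⟨⟨0, Nat.pos_of_ne_zero (NeZero.ne n)⟩⟩
  Finset.univ.sup' Finset.univ_nonempty x - Finset.univ.inf' Finset.univ_nonempty x

def PreservesCoordDiffs {ι : Type*} (φ : (ι → ℝ) → (ι → ℝ)) : Prop :=
  ∀ x i j, φ x i - φ x j = x i - x j

namespace PreservesCoordDiffs

variable {ι : Type*} {φ ψ : (ι → ℝ) → (ι → ℝ)}

lemma id : PreservesCoordDiffs (id : (ι → ℝ) → (ι → ℝ)) := fun _ _ _ => rfl

lemma comp (hφ : PreservesCoordDiffs φ) (hψ : PreservesCoordDiffs ψ) :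
    PreservesCoordDiffs (φ ∘ ψ) := fun x i j => (hφ (ψ x) i j).trans (hψ x i j)

lemma foldr_comp {l : List ((ι → ℝ) → (ι → ℝ))} (hl : ∀ φ ∈ l, PreservesCoordDiffs φ) :
    PreservesCoordDiffs (l.foldr (· ∘ ·) _root_.id) := by
  induction l with
  | nil => exact .id
  | cons φ l ih =>
    exact (hl φ List.mem_cons_self).comp (ih fun ψ hψ => hl ψ (List.mem_cons_of_mem φ hψ))

lemma eq_add_const (hφ : PreservesCoordDiffs φ) (x : ι → ℝ) (e : ι) :
    φ x = fun i => x i + (φ x e - x e) := by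
  funext i
  linarith [hφ x i e]

end PreservesCoordDiffs

lemma IsFlowMap.preservesCoordDiffs {n : ℕ} {γ : (Fin n → ℝ) → ℝ} {T : ℝ}
    {ψ : (Fin n → ℝ) → (Fin n → ℝ)} (hψ : IsFlowMap (fun x _ => γ x) T ψ) :
    PreservesCoordDiffs ψ := by
  intro x i j
  obtain ⟨z, hz0, hz, hzT⟩ := hψ x
  have hdiff : ∀ t, HasDerivAt (fun t => z t i - z t j) 0 t := fun t => by
    have h := (hasDerivAt_pi.1 (hz t) i).sub (hasDerivAt_pi.1 (hz t) j)
    rwa [sub_self] at h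
  have hconst := is_const_of_deriv_eq_zero (fun t => (hdiff t).differentiableAt)
    (fun t => (hdiff t).deriv) T 0
  simpa [hzT, hz0] using hconst

lemma preservesCoordDiffs_of_mem_attainSet {n : ℕ} {φ : (Fin n → ℝ) → (Fin n → ℝ)}
    (hφ : φ ∈ AttainSet (gammaFam n)) : PreservesCoordDiffs φ := by
  obtain ⟨k, -, fs, τ, ψ, hψ, rfl⟩ := hφ
  refine PreservesCoordDiffs.foldr_comp fun f hf => ?_
  obtain ⟨m, rfl⟩ := List.mem_ofFn.1 hf
  obtain ⟨hfs, -, hflow⟩ := hψ m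
  obtain ⟨γ, -, hγ⟩ := hfs
  exact (hγ ▸ hflow).preservesCoordDiffs

section maxMinusMin

variable {n : ℕ} [NeZero n]

lemma maxMinusMin_add_const (x : Fin n → ℝ) (c : ℝ) :
    maxMinusMin n (fun i => x i + c) = maxMinusMin n x := by
  have hinf : Finset.univ.inf' Finset.univ_nonempty (fun i => x i + c) =
      Finset.univ.inf' Finset.univ_nonempty x + c :=
    (map_finset_inf' (OrderIso.addRight c) Finset.univ_nonempty x).symm
  unfold maxMinusMin
  rw [← Finset.sup'_add, hinf]
  ring

lemma maxMinusMin_le_of_mem_Icc {x : Fin n → ℝ} {a b : ℝ} (hx : ∀ i, x i ∈ Set.Icc a b) :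
    maxMinusMin n x ≤ b - a := by
  unfold maxMinusMin
  have hsup := Finset.sup'_le Finset.univ_nonempty x fun i _ => (hx i).2
  have hinf := Finset.le_inf' Finset.univ_nonempty x fun i _ => (hx i).1
  linarith

lemma maxMinusMin_comp_of_preservesCoordDiffs {φ : (Fin n → ℝ) → (Fin n → ℝ)}
    (hφ : PreservesCoordDiffs φ) : maxMinusMin n ∘ φ = maxMinusMin n := by
  funext x
  rw [Function.comp_apply, hφ.eq_add_const x 0, maxMinusMin_add_const]

end maxMinusMin

lemma one_le_lpErr_of_one_le_norm {n : ℕ} {p : ℝ} (hp : 0 < p) {K : Set (Fin n → ℝ)}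
    (hK : MeasurableSet K) (hvol : volume K = 1) {f : (Fin n → ℝ) → ℝ}
    (hf : ∀ x ∈ K, 1 ≤ ‖f x‖) : 1 ≤ lpErr p K f := by
  have h := le_eLpNorm_of_bddBelow (μ := volume.restrict K) (by simpa using hp)
    ENNReal.ofReal_ne_top 1 hK (ae_of_all _ fun x hx => by exact_mod_cast hf x hx)
  simpa [lpErr, Measure.restrict_apply hK, hvol] using h

/-- flows of the family `{γ(x)𝟏}` preserve all coordinate differences;
with the terminal function `max − min`, every element of the hypothesis space equals
`g`, and the hypothesis space fails the `Sₙ` universal approximation property. -/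
theorem gamma_family_counterexample
    (n : ℕ) [NeZero n] :
    (∀ φ ∈ AttainSet (gammaFam n), ∀ x : Fin n → ℝ, ∀ i j : Fin n,
      φ x i - φ x j = x i - x j) ∧
    (∀ F ∈ Hode (gammaFam n) {maxMinusMin n}, F = maxMinusMin n) ∧
    (∀ p : ℝ, 1 ≤ p →
      ¬ HasGUAP (⊤ : Subgroup (Equiv.Perm (Fin n))) p
        (Hode (gammaFam n) {maxMinusMin n})) := by
  have hHode : ∀ F ∈ Hode (gammaFam n) {maxMinusMin n}, F = maxMinusMin n := by
    rintro F ⟨g, rfl, φ, hφ, rfl⟩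
    exact maxMinusMin_comp_of_preservesCoordDiffs (preservesCoordDiffs_of_mem_attainSet hφ)
  refine ⟨fun φ hφ => preservesCoordDiffs_of_mem_attainSet hφ, hHode, fun p hp huap => ?_⟩
  obtain ⟨F, hF, herr⟩ := huap (fun _ => 2) continuous_const (fun _ _ _ => rfl)
    (Set.Icc 0 1) isCompact_Icc (1 / 2) (by norm_num)
  obtain rfl := hHode F hF
  have hfar : ∀ x ∈ Set.Icc (0 : Fin n → ℝ) 1, 1 ≤ ‖2 - maxMinusMin n x‖ := fun x hx => by
    have := maxMinusMin_le_of_mem_Icc (a := 0) (b := 1) fun i => ⟨hx.1 i, hx.2 i⟩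
    rw [Real.norm_eq_abs]
    linarith [le_abs_self (2 - maxMinusMin n x)]
  have hlow := one_le_lpErr_of_one_le_norm (by linarith) measurableSet_Icc
    (by simp [Real.volume_Icc_pi]) hfar
  exact absurd (hlow.trans herr) (not_le.2 (ENNReal.ofReal_lt_one.2 (by norm_num)))

end SymDyn
end
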